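/- Let B' := B[λ_r^{−1}]. The smallest ℂ-linear subspace of B' containing e^φ and stable under all operators L_n (n ∈ ℤ), all ∂/∂λ_j and multiplication by λ_j (1 ≤ j ≤ r), and multiplication by λ_r^{−1}, equals e^φ·A[λ_1,…,λ_r][λ_r^{−1}] = { e^φ·f : f ∈ ℂ[x_1,x_2,…][λ_1,…,λ_r, λ_r^{−1}] }. (Equivalently: after localizing along the singular divisor {λ_r = 0}, the coherent state module generated from the coherent state e^φ by the Virasoro operators L_n and the differential operators in λ is the whole localized irregular Fock module; i.e. the Virasoro vertex algebra Vir_c is saturated in the Heisenberg vertex algebra with respect to the irregular Heisenberg vertex algebra F^{(r)}.) -/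

import Mathlib

/-!
STATEMENT 13.
Fix r ≥ 1 and ρ ∈ ℂ.  A := ℂ[x_1,x_2,…] (= `MvPolynomial ℕ ℂ`, variable `i`
is x_{i+1}).  B' := A[[λ_1,…,λ_r]][λ_r^{−1}] embeds in the space
W := ((Fin r →₀ ℤ) → A) of formal λ-expansions with integer exponents
(the coefficient of λ^d being an element of A); all the operators below
preserve B' ⊂ W, so the smallest stable subspace may be computed in W.
For i ∈ ℤ, a_i is: multiplication by x_{−i} for i < 0, i·∂/∂x_i for i > 0,
and 0 for i = 0.  For n ∈ ℤ,
  L_n := (1/2)·∑_{i∈ℤ} :a_i a_{n−i}: − ρ(n+1)·a_n,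
with :a_i a_j: := a_i∘a_j if i ≤ j and a_j∘a_i otherwise; on each coefficient
only finitely many terms are nonzero (realized by `finsum`), and L_n acts
coefficientwise in λ.  φ := ∑_{j=1}^r λ_j x_j/j, and e^φ ∈ W has coefficient
∏_j (x_j/j)^{d_j}/d_j! at λ^d (d ≥ 0).
CLAIM: the smallest ℂ-subspace of W containing e^φ and stable under all L_n
(n ∈ ℤ), all ∂/∂λ_j, multiplication by all λ_j (1 ≤ j ≤ r), and
multiplication by λ_r^{−1}, equals
  e^φ·A[λ_1,…,λ_r][λ_r^{−1}]
  = { e^φ·f : f a Laurent polynomial in λ with A-coefficients in which only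
      λ_r occurs with negative exponents }.
(The right-hand side is itself a subspace, so it equals its span.)
-/

noncomputable section

abbrev A : Type := MvPolynomial ℕ ℂ

/-- λ-Laurent expansions with coefficients in A. -/
abbrev W (r : ℕ) : Type := (Fin r →₀ ℤ) → A

/-- `a_i` on A: multiplication by `x_{−i}` for `i < 0`, `i·∂/∂x_i` for
`i > 0`, and `0` for `i = 0`. -/
def aZ (i : ℤ) (P : A) : A :=
  if i < 0 then MvPolynomial.X ((-i).toNat - 1) * P
  else ((i : ℂ)) • MvPolynomial.pderiv (i.toNat - 1) P

/-- The normally ordered product `:a_i a_j:`. -/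
def nop (i j : ℤ) (P : A) : A :=
  if i ≤ j then aZ i (aZ j P) else aZ j (aZ i P)

/-- `L_n := (1/2)·∑_{i∈ℤ} :a_i a_{n−i}: − ρ(n+1)·a_n` on A (the sum over i
is finitely supported on each polynomial; realized by `finsum`). -/
def LA (ρ : ℂ) (n : ℤ) (P : A) : A :=
  (1 / 2 : ℂ) • (∑ᶠ i : ℤ, nop i (n - i) P) - (ρ * ((n : ℂ) + 1)) • aZ n P

/-- Coefficientwise action of `L_n` on W. -/
def LW (r : ℕ) (ρ : ℂ) (n : ℤ) (w : W r) : W r := fun d => LA ρ n (w d)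

/-- `∂/∂λ_{j+1}` on W. -/
def dLamW (r : ℕ) (j : Fin r) (w : W r) : W r :=
  fun d => ((d j + 1 : ℤ) : ℂ) • w (d + Finsupp.single j 1)

/-- Multiplication by `λ_{j+1}` on W. -/
def mulLamW (r : ℕ) (j : Fin r) (w : W r) : W r :=
  fun d => w (d - Finsupp.single j 1)

/-- Multiplication by `λ_{j+1}^{−1}` on W. -/
def mulLamInvW (r : ℕ) (j : Fin r) (w : W r) : W r :=
  fun d => w (d + Finsupp.single j 1)

open Classical in
/-- `e^φ` for `φ = ∑_{j=1}^r λ_j x_j / j`: the coefficient of `λ^d` is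
`∏_j (x_j/j)^{d_j}/(d_j)!` when `d ≥ 0`, and `0` otherwise. -/
def ephiW (r : ℕ) : W r :=
  fun d =>
    if ∀ j, 0 ≤ d j then
      ∏ j : Fin r,
        (((((d j).toNat).factorial : ℂ) * ((((j : ℕ) : ℂ) + 1)) ^ ((d j).toNat))⁻¹) •
          (MvPolynomial.X (j : ℕ) : A) ^ ((d j).toNat)
    else 0

/-- Multiplication of `e^φ` by the λ-Laurent polynomial `f = ∑_m (f m)·λ^m`. -/
def EmulW (r : ℕ) (f : (Fin r →₀ ℤ) →₀ A) : W r :=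
  fun d => ∑ m ∈ f.support, f m * ephiW r (d - m)

/-!
Conjugating by `e^φ` turns the operators into operators on polynomials: `a_i e^φ = λ_i e^φ`
for `i > 0` (with `λ_i := 0` for `i > r`) and `∂_{λ_j} e^φ = (x_j / j) e^φ`, hence
  `L_n (P e^φ) = e^φ (L_n P + ∑_j λ_j a_{n-j} P + ½ ∑_{i+j=n} λ_i λ_j P - ρ (n+1) λ_n P)`,
  `∂_{λ_j} (P λ^m e^φ) = e^φ λ^m (x_j / j + m_j λ_j⁻¹) P`.
So `e^φ · A[λ_1, …, λ_r][λ_r⁻¹]` contains `e^φ` and is stable, which bounds the smallest stable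
subspace from above. Conversely a stable subspace contains every `λ^m e^φ`, and then every
`P λ^m e^φ` by induction on the weight of `P` (`x_i` has weight `i`): `x_i P λ^m e^φ` comes from
`∂_{λ_i}` when `i ≤ r`, and from `L_{r-i}` when `i > r`.

In the code `X j` is `x_{j+1}` and `j : Fin r` indexes `λ_{j+1}`.
-/

open MvPolynomial Finsupp

section FockSpace

lemma aZ_of_nonneg {i : ℤ} (hi : 0 ≤ i) (P : A) :
    aZ i P = (i : ℂ) • pderiv (i.toNat - 1) P :=
  if_neg (not_lt.2 hi)

lemma aZ_of_neg {i : ℤ} (hi : i < 0) (P : A) : aZ i P = X ((-i).toNat - 1) * P :=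
  if_pos hi

def aZₗ (i : ℤ) : A →ₗ[ℂ] A :=
  if i < 0 then LinearMap.mulLeft ℂ (X ((-i).toNat - 1))
  else (i : ℂ) • (pderiv (i.toNat - 1) : Derivation ℂ A A).toLinearMap

lemma aZₗ_apply (i : ℤ) (P : A) : aZₗ i P = aZ i P := by
  unfold aZₗ aZ
  split_ifs <;> rfl

def nopₗ (i j : ℤ) : A →ₗ[ℂ] A := if i ≤ j then aZₗ i ∘ₗ aZₗ j else aZₗ j ∘ₗ aZₗ i

lemma nopₗ_apply (i j : ℤ) (P : A) : nopₗ i j P = nop i j P := by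
  unfold nopₗ nop
  split_ifs <;> simp [aZₗ_apply]

def weightLE (N : ℤ) : Submodule ℂ A :=
  restrictSupport ℂ {d | (weight (fun i : ℕ => i + 1) d : ℤ) ≤ N}

lemma weightLE_mono {N N' : ℤ} (h : N ≤ N') : weightLE N ≤ weightLE N' :=
  restrictSupport_mono _ fun _ hd => le_trans hd h

lemma monomial_mem_weightLE {d : ℕ →₀ ℕ} {N : ℤ}
    (hd : (weight (fun i : ℕ => i + 1) d : ℤ) ≤ N) (c : ℂ) : monomial d c ∈ weightLE N :=
  (monomial_mem_restrictSupport ℂ).2 (.inl hd)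

lemma exists_mem_weightLE (P : A) : ∃ N : ℕ, P ∈ weightLE N :=
  ⟨P.support.sup (weight fun i : ℕ => i + 1), fun d hd => by
    exact_mod_cast Finset.le_sup (f := weight fun i : ℕ => i + 1) hd⟩

lemma eq_zero_of_mem_weightLE {P : A} {N : ℤ} (hP : P ∈ weightLE N) (hN : N < 0) : P = 0 := by
  refine MvPolynomial.support_eq_empty.1 (Finset.eq_empty_of_forall_notMem fun d hd => ?_)
  have : (weight (fun i : ℕ => i + 1) d : ℤ) ≤ N := hP hd
  omega

lemma aZ_mem_weightLE {P : A} {N : ℤ} (hP : P ∈ weightLE N) (i : ℤ) :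
    aZ i P ∈ weightLE (N - i) := by
  rw [weightLE, restrictSupport_eq_span] at hP
  rw [← aZₗ_apply]
  refine (Submodule.span_le (p := (weightLE (N - i)).comap (aZₗ i))).2 ?_ hP
  rintro _ ⟨d, hd : (weight (fun i : ℕ => i + 1) d : ℤ) ≤ N, rfl⟩
  simp only [SetLike.mem_coe, Submodule.mem_comap, aZₗ_apply]
  rcases lt_trichotomy i 0 with hi | rfl | hi
  · rw [aZ_of_neg hi, ← pow_one (X _), ← monomial_single_add]
    refine monomial_mem_weightLE ?_ 1
    simp only [map_add, weight_single, smul_eq_mul, one_mul]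
    push_cast
    omega
  · rw [aZ_of_nonneg le_rfl, Int.cast_zero, zero_smul]
    exact Submodule.zero_mem _
  · rw [aZ_of_nonneg hi.le, pderiv_monomial]
    refine Submodule.smul_mem _ _ ((monomial_mem_restrictSupport ℂ).2 ?_)
    by_cases hdi : d (i.toNat - 1) = 0
    · simp [hdi]
    · left
      have := weight_sub_single_add (w := fun i : ℕ => i + 1) hdi
      change ((weight _ _ : ℕ) : ℤ) ≤ _
      omega

lemma aZ_eq_zero_of_mem_weightLE {P : A} {N i : ℤ} (hP : P ∈ weightLE N) (hi : N < i) :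
    aZ i P = 0 :=
  eq_zero_of_mem_weightLE (aZ_mem_weightLE hP i) (by omega)

lemma nop_mem_weightLE {P : A} {N : ℤ} (hP : P ∈ weightLE N) (i j : ℤ) :
    nop i j P ∈ weightLE (N - i - j) := by
  unfold nop
  split_ifs
  · exact weightLE_mono (by omega) (aZ_mem_weightLE (aZ_mem_weightLE hP j) i)
  · exact aZ_mem_weightLE (aZ_mem_weightLE hP i) j

lemma LA_eq_sum {P : A} {N : ℤ} (hP : ∀ i, N < i → aZ i P = 0) (ρ : ℂ) (n : ℤ) :
    LA ρ n P = (1 / 2 : ℂ) • ∑ i ∈ Finset.Icc (n - N) N, nop i (n - i) P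
      - (ρ * ((n : ℂ) + 1)) • aZ n P := by
  have hnop : ∀ i j, N < i ∨ N < j → nop i j P = 0 := by
    intro i j h
    unfold nop
    split_ifs
    · rw [hP j (by omega), ← aZₗ_apply, map_zero]
    · rw [hP i (by omega), ← aZₗ_apply, map_zero]
  rw [LA, finsum_eq_sum_of_support_subset]
  intro i hi
  simp only [Function.mem_support, Finset.coe_Icc, Set.mem_Icc] at hi ⊢
  by_contra h
  exact hi (hnop _ _ (by omega))

lemma LA_eq_of_mem_weightLE {P : A} {N : ℤ} (hP : P ∈ weightLE N) (ρ : ℂ) (n : ℤ) :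
    LA ρ n P = ((1 / 2 : ℂ) • ∑ i ∈ Finset.Icc (n - N) N, nopₗ i (n - i)
      - (ρ * ((n : ℂ) + 1)) • aZₗ n) P := by
  simp [LA_eq_sum (fun i hi => aZ_eq_zero_of_mem_weightLE hP hi), nopₗ_apply, aZₗ_apply]

def LAₗ (ρ : ℂ) (n : ℤ) : A →ₗ[ℂ] A where
  toFun := LA ρ n
  map_add' P Q := by
    obtain ⟨N₁, h₁⟩ := exists_mem_weightLE P
    obtain ⟨N₂, h₂⟩ := exists_mem_weightLE Q
    have hP := weightLE_mono (le_max_left (N₁ : ℤ) N₂) h₁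
    have hQ := weightLE_mono (le_max_right (N₁ : ℤ) N₂) h₂
    rw [LA_eq_of_mem_weightLE (add_mem hP hQ), LA_eq_of_mem_weightLE hP,
      LA_eq_of_mem_weightLE hQ, map_add]
  map_smul' c P := by
    obtain ⟨N, hP⟩ := exists_mem_weightLE P
    rw [LA_eq_of_mem_weightLE (Submodule.smul_mem _ c hP), LA_eq_of_mem_weightLE hP, map_smul,
      RingHom.id_apply]

lemma LA_mem_weightLE {P : A} {N : ℤ} (hP : P ∈ weightLE N) (ρ : ℂ) (n : ℤ) :
    LA ρ n P ∈ weightLE (N - n) := by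
  rw [LA_eq_of_mem_weightLE hP]
  simp only [LinearMap.sub_apply, LinearMap.smul_apply, LinearMap.sum_apply, nopₗ_apply,
    aZₗ_apply]
  refine sub_mem (Submodule.smul_mem _ _ (Submodule.sum_mem _ fun i _ => ?_))
    (Submodule.smul_mem _ _ (aZ_mem_weightLE hP n))
  exact weightLE_mono (by omega) (nop_mem_weightLE hP i (n - i))

end FockSpace

section ExpPhi

/-- The coefficient of `λ_{j+1}^k` in `exp (λ_{j+1} x_{j+1} / (j+1))`. -/
def ephiFactor (j : ℕ) (k : ℤ) : A :=
  if 0 ≤ k then (((k.toNat.factorial : ℂ) * ((j : ℂ) + 1) ^ k.toNat)⁻¹) • X j ^ k.toNat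
  else 0

lemma ephiFactor_natCast (j t : ℕ) :
    ephiFactor j t = (((t.factorial : ℂ) * ((j : ℂ) + 1) ^ t)⁻¹) • X j ^ t := by
  simp [ephiFactor]

lemma ephiFactor_of_neg {j : ℕ} {k : ℤ} (hk : k < 0) : ephiFactor j k = 0 :=
  if_neg (not_le.2 hk)

lemma smul_pderiv_ephiFactor (j : ℕ) (k : ℤ) :
    ((j : ℂ) + 1) • pderiv j (ephiFactor j k) = ephiFactor j (k - 1) := by
  rcases lt_trichotomy k 0 with hk | rfl | hk
  · simp [ephiFactor_of_neg hk, ephiFactor_of_neg (by omega : k - 1 < 0)]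
  · simp [ephiFactor]
  obtain ⟨t, rfl⟩ : ∃ t : ℕ, k = t + 1 := ⟨(k - 1).toNat, by omega⟩
  rw [add_sub_cancel_right, ← Nat.cast_add_one t, ephiFactor_natCast, ephiFactor_natCast,
    Derivation.map_smul, pderiv_pow, pderiv_X_self, mul_one, smul_smul, smul_eq_C_mul,
    smul_eq_C_mul, ← mul_assoc, ← map_natCast C, ← C_mul, Nat.add_sub_cancel]
  congr 2
  push_cast [Nat.factorial_succ]
  have : (j : ℂ) + 1 ≠ 0 := Nat.cast_add_one_ne_zero j
  have : (t : ℂ) + 1 ≠ 0 := Nat.cast_add_one_ne_zero t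
  have : (t.factorial : ℂ) ≠ 0 := Nat.cast_ne_zero.2 t.factorial_ne_zero
  field_simp
  ring

lemma pderiv_ephiFactor_of_ne {i j : ℕ} (h : j ≠ i) (k : ℤ) :
    pderiv i (ephiFactor j k) = 0 := by
  unfold ephiFactor
  split_ifs
  · rw [Derivation.map_smul, pderiv_pow, pderiv_X_of_ne h, mul_zero, smul_zero]
  · exact map_zero _

lemma intCast_smul_ephiFactor (j : ℕ) (k : ℤ) :
    (k : ℂ) • ephiFactor j k = ((j : ℂ) + 1)⁻¹ • (X j * ephiFactor j (k - 1)) := by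
  rcases lt_trichotomy k 0 with hk | rfl | hk
  · simp [ephiFactor_of_neg hk, ephiFactor_of_neg (by omega : k - 1 < 0)]
  · simp [ephiFactor]
  obtain ⟨t, rfl⟩ : ∃ t : ℕ, k = t + 1 := ⟨(k - 1).toNat, by omega⟩
  rw [add_sub_cancel_right, ← Nat.cast_add_one t, ephiFactor_natCast, ephiFactor_natCast,
    mul_smul_comm, smul_smul, smul_smul, ← pow_succ']
  congr 1
  push_cast [Nat.factorial_succ]
  have : (j : ℂ) + 1 ≠ 0 := Nat.cast_add_one_ne_zero j
  have : (t : ℂ) + 1 ≠ 0 := Nat.cast_add_one_ne_zero t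
  have : (t.factorial : ℂ) ≠ 0 := Nat.cast_ne_zero.2 t.factorial_ne_zero
  field_simp
  ring

variable {r : ℕ}

lemma ephiW_eq_prod (e : Fin r →₀ ℤ) : ephiW r e = ∏ j : Fin r, ephiFactor j (e j) := by
  unfold ephiW
  split_ifs with h
  · exact Finset.prod_congr rfl fun j _ => (if_pos (h j)).symm
  · push Not at h
    obtain ⟨j, hj⟩ := h
    exact (Finset.prod_eq_zero (Finset.mem_univ j) (ephiFactor_of_neg hj)).symm

lemma pderiv_prod_ephiFactor {s : Finset (Fin r)} {k : ℕ} (hk : ∀ j ∈ s, (j : ℕ) ≠ k)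
    (e : Fin r →₀ ℤ) : pderiv k (∏ j ∈ s, ephiFactor j (e j)) = 0 :=
  Finset.prod_induction _ (fun P => pderiv k P = 0)
    (fun P Q hP hQ => by rw [Derivation.leibniz, hP, hQ, smul_zero, smul_zero, add_zero])
    (Derivation.map_one_eq_zero _) fun j hj => pderiv_ephiFactor_of_ne (hk j hj) _

lemma ephiW_eq_mul_prod_erase (j : Fin r) (e : Fin r →₀ ℤ) :
    ephiW r e = ephiFactor j (e j) * ∏ j' ∈ Finset.univ.erase j, ephiFactor j' (e j') := by
  rw [ephiW_eq_prod, ← Finset.mul_prod_erase _ _ (Finset.mem_univ j)]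

lemma ephiW_sub_single (j : Fin r) (e : Fin r →₀ ℤ) :
    ephiW r (e - single j 1) =
      ephiFactor j (e j - 1) * ∏ j' ∈ Finset.univ.erase j, ephiFactor j' (e j') := by
  rw [ephiW_eq_mul_prod_erase j]
  congr 1
  · simp
  · refine Finset.prod_congr rfl fun j' hj' => ?_
    simp [single_eq_of_ne (Finset.ne_of_mem_erase hj')]

lemma smul_pderiv_ephiW (j : Fin r) (e : Fin r →₀ ℤ) :
    (((j : ℕ) : ℂ) + 1) • pderiv (j : ℕ) (ephiW r e) = ephiW r (e - single j 1) := by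
  rw [ephiW_eq_mul_prod_erase j, ephiW_sub_single, Derivation.leibniz,
    pderiv_prod_ephiFactor (fun j' hj' h => Finset.ne_of_mem_erase hj' (Fin.ext h)),
    smul_zero, zero_add, smul_eq_mul, ← mul_smul_comm, smul_pderiv_ephiFactor, mul_comm]

lemma pderiv_ephiW_of_le {k : ℕ} (hk : r ≤ k) (e : Fin r →₀ ℤ) :
    pderiv k (ephiW r e) = 0 := by
  rw [ephiW_eq_prod]
  exact pderiv_prod_ephiFactor (fun j _ => by omega) e

lemma intCast_smul_ephiW (j : Fin r) (e : Fin r →₀ ℤ) :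
    (e j : ℂ) • ephiW r e = (((j : ℕ) : ℂ) + 1)⁻¹ • (X (j : ℕ) * ephiW r (e - single j 1)) := by
  rw [ephiW_eq_mul_prod_erase j, ephiW_sub_single, ← smul_mul_assoc, intCast_smul_ephiFactor,
    smul_mul_assoc, mul_assoc]

end ExpPhi

section LambdaOperators

variable {r : ℕ}

def mulLamPowW (m : Fin r →₀ ℤ) : W r →ₗ[A] W r := LinearMap.funLeft A A (· - m)

@[simp] lemma mulLamPowW_apply (m : Fin r →₀ ℤ) (w : W r) (d : Fin r →₀ ℤ) :
    mulLamPowW m w d = w (d - m) := rfl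

lemma mulLamPowW_zero (w : W r) : mulLamPowW 0 w = w := by
  funext d
  simp

lemma mulLamPowW_add (m m' : Fin r →₀ ℤ) (w : W r) :
    mulLamPowW (m + m') w = mulLamPowW m' (mulLamPowW m w) := by
  funext d
  simp [sub_add_eq_sub_sub_swap]

lemma mulLamInvW_mulLamW (j : Fin r) (w : W r) : mulLamInvW r j (mulLamW r j w) = w := by
  funext d
  simp [mulLamInvW, mulLamW]

/-- Multiplication by `λ_i` for `i : ℤ`, where `λ_i := 0` unless `1 ≤ i ≤ r`. -/
def mulLamZW (i : ℤ) : W r →ₗ[A] W r :=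
  ∑ j : Fin r with (j.val : ℤ) + 1 = i, mulLamPowW (single j 1)

lemma mulLamZW_apply (i : ℤ) (w : W r) (e : Fin r →₀ ℤ) :
    mulLamZW i w e = ∑ j : Fin r with (j.val : ℤ) + 1 = i, w (e - single j 1) := by
  simp [mulLamZW]

lemma mulLamZW_of_lt_one {i : ℤ} (hi : i < 1) : mulLamZW (r := r) i = 0 :=
  Finset.sum_eq_zero fun j hj => absurd (Finset.mem_filter.1 hj).2 (by omega)

lemma mulLamZW_of_lt {i : ℤ} (hi : r < i) : mulLamZW (r := r) i = 0 :=
  Finset.sum_eq_zero fun j hj => absurd (Finset.mem_filter.1 hj).2 (by omega)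

lemma mulLamZW_comm (i i' : ℤ) (w : W r) :
    mulLamZW i (mulLamZW i' w) = mulLamZW i' (mulLamZW i w) := by
  funext e
  simp only [mulLamZW_apply]
  rw [Finset.sum_comm]
  simp only [sub_right_comm e]

lemma mulLamZW_mulLamPowW (i : ℤ) (m : Fin r →₀ ℤ) (w : W r) :
    mulLamZW i (mulLamPowW m w) = mulLamPowW m (mulLamZW i w) := by
  funext e
  simp only [mulLamZW_apply, mulLamPowW_apply, sub_right_comm e]

lemma sum_mul_mulLamZW_apply {I : Finset ℤ} (hI : ∀ j : Fin r, (j : ℤ) + 1 ∈ I) (f : ℤ → A)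
    (v : ℤ → W r) (e : Fin r →₀ ℤ) :
    ∑ i ∈ I, f i * mulLamZW i (v i) e
      = ∑ j : Fin r, f (j + 1) * v (j + 1) (e - single j 1) := by
  simp only [mulLamZW_apply, Finset.mul_sum]
  rw [← Finset.sum_fiberwise_of_maps_to (g := fun j : Fin r => (j : ℤ) + 1) (t := I)
    (fun j _ => hI j)]
  refine Finset.sum_congr rfl fun i _ => Finset.sum_congr rfl fun j hj => ?_
  rw [(Finset.mem_filter.1 hj).2]

lemma dLamW_smul (j : Fin r) (P : A) (w : W r) : dLamW r j (P • w) = P • dLamW r j w := by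
  funext d
  exact (mul_smul_comm (_ : ℂ) P _).symm

lemma dLamW_mulLamPowW (j : Fin r) (m : Fin r →₀ ℤ) (w : W r) :
    dLamW r j (mulLamPowW m w)
      = mulLamPowW m (dLamW r j w) + (m j : ℂ) • mulLamPowW (m - single j 1) w := by
  funext d
  simp only [dLamW, mulLamPowW_apply, Pi.add_apply, Pi.smul_apply, Finsupp.sub_apply]
  rw [show d - m + single j 1 = d + single j 1 - m by abel,
    show d - (m - single j 1) = d + single j 1 - m by abel, ← add_smul]
  push_cast
  ring_nf

lemma dLamW_ephiW (j : Fin r) :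
    dLamW r j (ephiW r) = ((((j : ℕ) : ℂ) + 1)⁻¹ • X (j : ℕ) : A) • ephiW r := by
  funext d
  have h := intCast_smul_ephiW j (d + single j 1)
  rw [add_sub_cancel_right, Finsupp.add_apply, single_eq_same] at h
  rw [dLamW, h, Pi.smul_apply, smul_eq_mul, smul_mul_assoc]

lemma dLamW_smul_mulLamPowW_ephiW (j : Fin r) (P : A) (m : Fin r →₀ ℤ) :
    dLamW r j (P • mulLamPowW m (ephiW r))
      = (((((j : ℕ) : ℂ) + 1)⁻¹ • X (j : ℕ)) * P) • mulLamPowW m (ephiW r)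
        + (m j : ℂ) • (P • mulLamPowW (m - single j 1) (ephiW r)) := by
  rw [dLamW_smul, dLamW_mulLamPowW, dLamW_ephiW, map_smul, smul_add, smul_smul, mul_comm,
    smul_comm P]

end LambdaOperators

section Coherent

variable {r : ℕ} {w : W r}

def IsCoherent (w : W r) : Prop := ∀ i : ℤ, 0 < i → ∀ e, aZ i (w e) = mulLamZW i w e

lemma isCoherent_ephiW : IsCoherent (ephiW r) := by
  intro i hi e
  obtain ⟨k, rfl⟩ : ∃ k : ℕ, i = k + 1 := ⟨i.toNat - 1, by omega⟩
  rw [aZ_of_nonneg hi.le, mulLamZW_apply, show (k + 1 : ℤ).toNat - 1 = k by omega]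
  push_cast
  by_cases hk : k < r
  · rw [Finset.sum_eq_single_of_mem (⟨k, hk⟩ : Fin r) (by simp)
      (fun j hj hne => absurd (Fin.ext (by simp at hj; omega)) hne)]
    exact smul_pderiv_ephiW ⟨k, hk⟩ e
  · rw [pderiv_ephiW_of_le (not_lt.1 hk), smul_zero, Finset.sum_eq_zero]
    intro j hj
    simp at hj
    omega

lemma IsCoherent.map_mulLamPowW (hw : IsCoherent w) (m : Fin r →₀ ℤ) :
    IsCoherent (mulLamPowW m w) := fun i hi e => by
  rw [mulLamZW_mulLamPowW]
  exact hw i hi (e - m)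

lemma IsCoherent.map_mulLamZW (hw : IsCoherent w) (i' : ℤ) : IsCoherent (mulLamZW i' w) :=
  fun i hi e => by
    rw [mulLamZW_comm, mulLamZW_apply, mulLamZW_apply, ← aZₗ_apply, map_sum]
    exact Finset.sum_congr rfl fun j _ => by rw [aZₗ_apply, hw i hi]

lemma IsCoherent.aZ_mul (hw : IsCoherent w) (i : ℤ) (P : A) (e : Fin r →₀ ℤ) :
    aZ i (P * w e) = aZ i P * w e + P * mulLamZW i w e := by
  rcases lt_or_ge 0 i with hi | hi
  · rw [← hw i hi]
    simp only [aZ_of_nonneg hi.le, pderiv_mul, smul_add, smul_mul_assoc, mul_smul_comm]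
  · rw [mulLamZW_of_lt_one (by omega), LinearMap.zero_apply, Pi.zero_apply, mul_zero, add_zero]
    rcases hi.lt_or_eq with hi | rfl
    · rw [aZ_of_neg hi, aZ_of_neg hi, mul_assoc]
    · simp [aZ_of_nonneg]

lemma IsCoherent.aZ_aZ_mul (hw : IsCoherent w) (i j : ℤ) (P : A) (e : Fin r →₀ ℤ) :
    aZ i (aZ j (P * w e)) = aZ i (aZ j P) * w e + aZ j P * mulLamZW i w e
      + aZ i P * mulLamZW j w e + P * mulLamZW i (mulLamZW j w) e := by
  rw [hw.aZ_mul, ← aZₗ_apply i, map_add, aZₗ_apply, aZₗ_apply, hw.aZ_mul,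
    (hw.map_mulLamZW j).aZ_mul]
  abel

lemma IsCoherent.nop_mul (hw : IsCoherent w) (i j : ℤ) (P : A) (e : Fin r →₀ ℤ) :
    nop i j (P * w e) = nop i j P * w e + aZ j P * mulLamZW i w e
      + aZ i P * mulLamZW j w e + P * mulLamZW i (mulLamZW j w) e := by
  unfold nop
  split_ifs
  · exact hw.aZ_aZ_mul i j P e
  · rw [hw.aZ_aZ_mul, mulLamZW_comm]
    abel

lemma IsCoherent.LA_mul (hw : IsCoherent w) (ρ : ℂ) (n : ℤ) (P : A) (e : Fin r →₀ ℤ) :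
    LA ρ n (P * w e) = LA ρ n P * w e
      + ∑ j : Fin r, aZ (n - (j + 1)) P * w (e - single j 1)
      + (1 / 2 : ℂ) • ∑ j : Fin r, P * mulLamZW (n - (j + 1)) w (e - single j 1)
      - (ρ * ((n : ℂ) + 1)) • (P * mulLamZW n w e) := by
  obtain ⟨N₀, hP₀⟩ := exists_mem_weightLE P
  set N : ℤ := N₀ + r + n.natAbs
  have hP : P ∈ weightLE N := weightLE_mono (by omega) hP₀
  have hPw : ∀ i, N < i → aZ i (P * w e) = 0 := fun i hi => by
    rw [hw.aZ_mul, aZ_eq_zero_of_mem_weightLE hP hi, mulLamZW_of_lt (by omega)]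
    simp
  have hI : ∀ j : Fin r, (j : ℤ) + 1 ∈ Finset.Icc (n - N) N := fun j => by
    simp only [Finset.mem_Icc]
    omega
  have hrefl : ∑ i ∈ Finset.Icc (n - N) N, aZ i P * mulLamZW (n - i) w e
      = ∑ i ∈ Finset.Icc (n - N) N, aZ (n - i) P * mulLamZW i w e :=
    Finset.sum_nbij' (n - ·) (n - ·) (by simp; omega) (by simp; omega) (by simp) (by simp)
      (by simp)
  rw [LA_eq_sum hPw, LA_eq_sum (fun i hi => aZ_eq_zero_of_mem_weightLE hP hi), hw.aZ_mul n]
  simp only [hw.nop_mul, Finset.sum_add_distrib, hrefl,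
    sum_mul_mulLamZW_apply hI (fun i => aZ (n - i) P) (fun _ => w),
    sum_mul_mulLamZW_apply hI (fun _ => P) (fun i => mulLamZW (n - i) w),
    sub_mul, smul_mul_assoc, Finset.sum_mul]
  module

lemma IsCoherent.LW_smul (hw : IsCoherent w) (ρ : ℂ) (n : ℤ) (P : A) :
    LW r ρ n (P • w) = LA ρ n P • w
      + ∑ j : Fin r, mulLamW r j (aZ (n - (j + 1)) P • w)
      + (1 / 2 : ℂ) • ∑ j : Fin r, mulLamW r j (P • mulLamZW (n - (j + 1)) w)
      - (ρ * ((n : ℂ) + 1)) • (P • mulLamZW n w) := by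
  funext e
  simp only [LW, mulLamW, Pi.add_apply, Pi.sub_apply, Pi.smul_apply, Finset.sum_apply,
    smul_eq_mul]
  exact hw.LA_mul ρ n P e

end Coherent

lemma Submodule.restrictScalars_span_le {R A M : Type*} [CommSemiring R] [Semiring A]
    [Algebra R A] [AddCommMonoid M] [Module R M] [Module A M] [IsScalarTower R A M]
    {s : Set M} {V : Submodule R M} (h : ∀ a : A, ∀ x ∈ s, a • x ∈ V) :
    (Submodule.span A s).restrictScalars R ≤ V := by
  rw [← Submodule.span_smul_of_span_eq_top (Submodule.span_univ (R := R)), Submodule.span_le]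
  rintro _ ⟨a, -, x, hx, rfl⟩
  exact h a x hx

section Stability

variable {r : ℕ}

/-- Exponents of the Laurent monomials of `ℂ[λ_1, …, λ_r][λ_r⁻¹]`. -/
def Admissible (m : Fin r →₀ ℤ) : Prop := ∀ j : Fin r, (j : ℕ) + 1 < r → 0 ≤ m j

lemma Admissible.add_single {m : Fin r →₀ ℤ} (hm : Admissible m) (j : Fin r) :
    Admissible (m + single j 1) := fun j' hj' => by
  have := hm j' hj'
  rw [Finsupp.add_apply, single_apply]
  split_ifs <;> omega

lemma Admissible.sub_single {m : Fin r →₀ ℤ} (hm : Admissible m) {j : Fin r}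
    (hj : (j : ℕ) + 1 < r → m j ≠ 0) : Admissible (m - single j 1) := fun j' hj' => by
  have := hm j' hj'
  rw [Finsupp.sub_apply, single_apply]
  split_ifs with h
  · subst h
    have := hj hj'
    omega
  · omega

variable (r) in
/-- `e^φ · A[λ_1, …, λ_r][λ_r⁻¹]`. -/
def ephiSpan : Submodule A (W r) :=
  Submodule.span A ((fun m => mulLamPowW m (ephiW r)) '' {m | Admissible m})

lemma smul_mem_ephiSpan (P : A) {m : Fin r →₀ ℤ} (hm : Admissible m) :
    P • mulLamPowW m (ephiW r) ∈ ephiSpan r :=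
  Submodule.smul_mem _ P (Submodule.subset_span ⟨m, hm, rfl⟩)

lemma ephiW_mem_ephiSpan : ephiW r ∈ ephiSpan r := by
  simpa [mulLamPowW_zero] using smul_mem_ephiSpan 1 (m := 0) fun _ _ => le_rfl

lemma map_mem_ephiSpan (O : W r →ₗ[ℂ] W r)
    (hO : ∀ (P : A) (m : Fin r →₀ ℤ), Admissible m →
      O (P • mulLamPowW m (ephiW r)) ∈ ephiSpan r)
    {w : W r} (hw : w ∈ ephiSpan r) : O w ∈ ephiSpan r := by
  refine Submodule.restrictScalars_span_le
    (V := ((ephiSpan r).restrictScalars ℂ).comap O) ?_ hw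
  rintro P _ ⟨m, hm, rfl⟩
  exact hO P m hm

lemma mulLamPowW_mem_ephiSpan {k : Fin r →₀ ℤ} (hk : ∀ m, Admissible m → Admissible (m + k))
    {w : W r} (hw : w ∈ ephiSpan r) : mulLamPowW k w ∈ ephiSpan r := by
  refine map_mem_ephiSpan ((mulLamPowW k).restrictScalars ℂ) (fun P m hm => ?_) hw
  rw [LinearMap.restrictScalars_apply, map_smul, ← mulLamPowW_add]
  exact smul_mem_ephiSpan P (hk m hm)

lemma mulLamW_mem_ephiSpan (j : Fin r) {w : W r} (hw : w ∈ ephiSpan r) :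
    mulLamW r j w ∈ ephiSpan r :=
  mulLamPowW_mem_ephiSpan (fun _ hm => hm.add_single j) hw

lemma mulLamZW_mem_ephiSpan (i : ℤ) {w : W r} (hw : w ∈ ephiSpan r) :
    mulLamZW i w ∈ ephiSpan r := by
  rw [mulLamZW, LinearMap.sum_apply]
  exact Submodule.sum_mem _ fun j _ => mulLamW_mem_ephiSpan j hw

lemma mulLamInvW_mem_ephiSpan {j : Fin r} (hj : (j : ℕ) + 1 = r) {w : W r}
    (hw : w ∈ ephiSpan r) : mulLamInvW r j w ∈ ephiSpan r := by
  have : mulLamInvW r j w = mulLamPowW (-single j 1) w := by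
    funext d
    simp [mulLamInvW]
  rw [this]
  exact mulLamPowW_mem_ephiSpan (fun m hm => (sub_eq_add_neg m _) ▸ hm.sub_single (by omega)) hw

lemma LW_mem_ephiSpan (ρ : ℂ) (n : ℤ) {w : W r} (hw : w ∈ ephiSpan r) :
    LW r ρ n w ∈ ephiSpan r := by
  refine map_mem_ephiSpan ((LAₗ ρ n).compLeft _) (fun P m hm => ?_) hw
  have hE : mulLamPowW m (ephiW r) ∈ ephiSpan r := Submodule.subset_span ⟨m, hm, rfl⟩
  change LW r ρ n _ ∈ _
  rw [(isCoherent_ephiW.map_mulLamPowW m).LW_smul]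
  refine sub_mem (add_mem (add_mem (Submodule.smul_mem _ _ hE)
    (Submodule.sum_mem _ fun j _ => ?_)) (Submodule.smul_of_tower_mem _ _
      (Submodule.sum_mem _ fun j _ => ?_)))
    (Submodule.smul_of_tower_mem _ _ (Submodule.smul_mem _ _ (mulLamZW_mem_ephiSpan _ hE)))
  · exact mulLamW_mem_ephiSpan j (Submodule.smul_mem _ _ hE)
  · exact mulLamW_mem_ephiSpan j (Submodule.smul_mem _ _ (mulLamZW_mem_ephiSpan _ hE))

def dLamWₗ (j : Fin r) : W r →ₗ[ℂ] W r where
  toFun := dLamW r j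
  map_add' v w := funext fun _ => smul_add _ (v _) (w _)
  map_smul' c w := funext fun _ => smul_comm _ c (w _)

lemma dLamW_mem_ephiSpan (j : Fin r) {w : W r} (hw : w ∈ ephiSpan r) :
    dLamW r j w ∈ ephiSpan r := by
  refine map_mem_ephiSpan (dLamWₗ j) (fun P m hm => ?_) hw
  change dLamW r j _ ∈ _
  rw [dLamW_smul_mulLamPowW_ephiW]
  refine add_mem (smul_mem_ephiSpan _ hm) ?_
  by_cases hmj : m j = 0
  · simp [hmj]
  · exact Submodule.smul_of_tower_mem _ _ (smul_mem_ephiSpan _ (hm.sub_single fun _ => hmj))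

lemma EmulW_eq_linearCombination (f : (Fin r →₀ ℤ) →₀ A) :
    EmulW r f = Finsupp.linearCombination A (fun m => mulLamPowW m (ephiW r)) f := by
  funext d
  simp [EmulW, linearCombination_apply, Finsupp.sum]

lemma span_EmulW_eq :
    Submodule.span ℂ {w : W r | ∃ f : (Fin r →₀ ℤ) →₀ A,
      (∀ m ∈ f.support, ∀ j : Fin r, (j : ℕ) + 1 < r → 0 ≤ m j) ∧ w = EmulW r f}
      = (ephiSpan r).restrictScalars ℂ := by
  convert Submodule.span_eq ((ephiSpan r).restrictScalars ℂ)
  ext w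
  simp only [ephiSpan, Finsupp.span_image_eq_map_linearCombination, Submodule.coe_restrictScalars,
    SetLike.mem_coe, Submodule.mem_map, mem_supported, EmulW_eq_linearCombination, eq_comm]
  rfl

end Stability

section Generation

variable {r : ℕ} {ρ : ℂ} {V : Submodule ℂ (W r)}

lemma mulLamPowW_nsmul_mem {k : Fin r →₀ ℤ} (hk : ∀ w ∈ V, mulLamPowW k w ∈ V) (t : ℕ) :
    ∀ w ∈ V, mulLamPowW (t • k) w ∈ V := by
  induction t with
  | zero => simp [mulLamPowW_zero]
  | succ t ih => exact fun w hw => by rw [succ_nsmul, mulLamPowW_add]; exact hk _ (ih w hw)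

lemma mulLamPowW_mem_of_admissible (hr : 1 ≤ r)
    (hM : ∀ j : Fin r, ∀ w ∈ V, mulLamW r j w ∈ V)
    (hI : ∀ w ∈ V, mulLamInvW r ⟨r - 1, Nat.sub_lt hr Nat.one_pos⟩ w ∈ V) {m : Fin r →₀ ℤ}
    (hm : Admissible m) {w : W r} (hw : w ∈ V) : mulLamPowW m w ∈ V := by
  induction m using Finsupp.induction generalizing w with
  | zero => rwa [mulLamPowW_zero]
  | single_add a b f ha hb ih =>
    rw [Finsupp.notMem_support_iff] at ha
    have hf : Admissible f := fun j hj => by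
      have := hm j hj
      rw [Finsupp.add_apply, single_apply] at this
      split_ifs at this with h
      · exact h ▸ ha.ge
      · omega
    rw [add_comm, mulLamPowW_add]
    suffices hab : ∀ w ∈ V, mulLamPowW (single a b) w ∈ V from hab _ (ih hf hw)
    rcases le_or_gt 0 b with hb0 | hb0
    · lift b to ℕ using hb0
      simpa using mulLamPowW_nsmul_mem (hM a) b
    · have ha' : a = ⟨r - 1, by omega⟩ := Fin.ext <| show (a : ℕ) = r - 1 by
        have := hm a
        simp only [Finsupp.add_apply, single_eq_same, ha, add_zero] at this
        omega
      have hinv : ∀ w ∈ V, mulLamPowW (-single a 1) w ∈ V := fun w hw => by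
        convert ha' ▸ hI w hw using 1
        funext d
        simp [mulLamInvW]
      simpa [← Finsupp.single_neg, Finsupp.smul_single, show ((-b).toNat : ℤ) = -b by omega]
        using mulLamPowW_nsmul_mem hinv (-b).toNat

lemma X_mul_smul_mem_of_lt (hD : ∀ j : Fin r, ∀ w ∈ V, dLamW r j w ∈ V) {k : ℕ} (hk : k < r)
    {Q : A} (hQ : ∀ m, Admissible m → Q • mulLamPowW m (ephiW r) ∈ V) {m : Fin r →₀ ℤ}
    (hm : Admissible m) : (X k * Q) • mulLamPowW m (ephiW r) ∈ V := by
  set j : Fin r := ⟨k, hk⟩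
  have hdiff := hD j _ (hQ m hm)
  rw [dLamW_smul_mulLamPowW_ephiW] at hdiff
  have hlow : (m j : ℂ) • (Q • mulLamPowW (m - single j 1) (ephiW r)) ∈ V := by
    by_cases hmj : m j = 0
    · simp [hmj]
    · exact V.smul_mem _ (hQ _ (hm.sub_single fun _ => hmj))
  have := V.smul_mem ((k : ℂ) + 1) (V.sub_mem hdiff hlow)
  rwa [add_sub_cancel_right, ← smul_assoc, smul_mul_assoc, smul_smul,
    mul_inv_cancel₀ (Nat.cast_add_one_ne_zero k), one_smul] at this

/-- For `n = r - (k + 1) < 0` the quadratic and `ρ`-terms of `L_n` vanish, the `λ_r`-term of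
`L_n (Q λ^m e^φ)` is `λ_r x_{k+1} Q λ^m e^φ`, and all its other terms have lower weight. -/
lemma X_mul_smul_mem_of_le (hr : 1 ≤ r) (hL : ∀ n : ℤ, ∀ w ∈ V, LW r ρ n w ∈ V)
    (hM : ∀ j : Fin r, ∀ w ∈ V, mulLamW r j w ∈ V)
    (hI : ∀ w ∈ V, mulLamInvW r ⟨r - 1, Nat.sub_lt hr Nat.one_pos⟩ w ∈ V) {k : ℕ} (hk : r ≤ k)
    {Q : A} {N : ℤ} (hQ : Q ∈ weightLE N)
    (IH : ∀ Q' ∈ weightLE (N + k), ∀ m, Admissible m → Q' • mulLamPowW m (ephiW r) ∈ V)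
    {m : Fin r →₀ ℤ} (hm : Admissible m) : (X k * Q) • mulLamPowW m (ephiW r) ∈ V := by
  set n : ℤ := r - (k + 1)
  set last : Fin r := ⟨r - 1, by omega⟩
  have hLW := hL n _ (IH Q (weightLE_mono (by omega) hQ) m hm)
  rw [(isCoherent_ephiW.map_mulLamPowW m).LW_smul, mulLamZW_of_lt_one (by omega)] at hLW
  have hquad : ∀ j : Fin r, mulLamZW (r := r) (n - (j + 1)) = 0 :=
    fun j => mulLamZW_of_lt_one (by omega)
  simp only [hquad, LinearMap.zero_apply, smul_zero, show ∀ j, mulLamW r j (0 : W r) = 0 from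
    fun _ => rfl, Finset.sum_const_zero, add_zero, sub_zero] at hLW
  set x := mulLamPowW m (ephiW r)
  have hLA : LA ρ n Q • x ∈ V := IH _ (weightLE_mono (by omega) (LA_mem_weightLE hQ ρ n)) m hm
  have hrest : ∑ j ∈ Finset.univ.erase last, mulLamW r j (aZ (n - (j + 1)) Q • x) ∈ V := by
    refine Submodule.sum_mem _ fun j hj =>
      hM j _ (IH _ (weightLE_mono ?_ (aZ_mem_weightLE hQ _)) m hm)
    have : (j : ℕ) ≠ r - 1 := fun h => Finset.ne_of_mem_erase hj (Fin.ext h)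
    omega
  rw [← Finset.add_sum_erase _ _ (Finset.mem_univ last), ← add_assoc] at hLW
  have hlast := hI _ (by simpa using V.sub_mem (V.sub_mem hLW hLA) hrest)
  rwa [mulLamInvW_mulLamW,
    show n - (((last : ℕ) : ℤ) + 1) = -((k : ℤ) + 1) by simp [last, n]; omega,
    aZ_of_neg (by omega), show (-(-((k : ℤ) + 1))).toNat - 1 = k by omega] at hlast

lemma smul_mulLamPowW_ephiW_mem (hr : 1 ≤ r) (hE : ephiW r ∈ V)
    (hL : ∀ n : ℤ, ∀ w ∈ V, LW r ρ n w ∈ V) (hD : ∀ j : Fin r, ∀ w ∈ V, dLamW r j w ∈ V)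
    (hM : ∀ j : Fin r, ∀ w ∈ V, mulLamW r j w ∈ V)
    (hI : ∀ w ∈ V, mulLamInvW r ⟨r - 1, Nat.sub_lt hr Nat.one_pos⟩ w ∈ V) (P : A)
    {m : Fin r →₀ ℤ} (hm : Admissible m) : P • mulLamPowW m (ephiW r) ∈ V := by
  obtain ⟨N, hP⟩ := exists_mem_weightLE P
  induction N using Nat.strong_induction_on generalizing P m with
  | _ N IH =>
  rw [weightLE, restrictSupport_eq_span] at hP
  induction hP using Submodule.span_induction with
  | mem _ h =>
    obtain ⟨d, hd : (weight (fun i : ℕ => i + 1) d : ℤ) ≤ N, rfl⟩ := h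
    by_cases hd0 : d = 0
    · simpa [hd0] using mulLamPowW_mem_of_admissible hr hM hI hm hE
    obtain ⟨k, hk⟩ := Finsupp.support_nonempty_iff.2 hd0
    have hdk : d k ≠ 0 := Finsupp.mem_support_iff.1 hk
    have hwt := weight_sub_single_add (w := fun i : ℕ => i + 1) hdk
    set N' := weight (fun i : ℕ => i + 1) (d - single k 1)
    have hQ : monomial (d - single k 1) (1 : ℂ) ∈ weightLE N' := monomial_mem_weightLE le_rfl 1
    have IH' : ∀ Q ∈ weightLE (N' + k), ∀ m, Admissible m → Q • mulLamPowW m (ephiW r) ∈ V :=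
      fun Q hQ m hm => IH (N' + k) (by omega) Q hm (by exact_mod_cast hQ)
    rw [← sub_add_single_one_cancel hdk, add_comm]
    simp only [monomial_single_add, pow_one]
    rcases lt_or_ge k r with hkr | hkr
    · exact X_mul_smul_mem_of_lt hD hkr (fun m hm => IH' _ (weightLE_mono (by omega) hQ) m hm) hm
    · exact X_mul_smul_mem_of_le hr hL hM hI hkr hQ IH' hm
  | zero => simp
  | add _ _ _ _ h₁ h₂ => rw [add_smul]; exact add_mem h₁ h₂
  | smul c _ _ h => rw [smul_assoc]; exact V.smul_mem c h

end Generation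

theorem statement13 (r : ℕ) (hr : 1 ≤ r) (ρ : ℂ) :
    sInf {V : Submodule ℂ (W r) |
        ephiW r ∈ V ∧
        (∀ n : ℤ, ∀ w ∈ V, LW r ρ n w ∈ V) ∧
        (∀ j : Fin r, ∀ w ∈ V, dLamW r j w ∈ V) ∧
        (∀ j : Fin r, ∀ w ∈ V, mulLamW r j w ∈ V) ∧
        (∀ w ∈ V, mulLamInvW r (⟨r - 1, by omega⟩ : Fin r) w ∈ V)}
      = Submodule.span ℂ
          {w : W r | ∃ f : (Fin r →₀ ℤ) →₀ A,
            (∀ m ∈ f.support, ∀ j : Fin r, (j : ℕ) + 1 < r → 0 ≤ m j) ∧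
            w = EmulW r f} := by
  rw [span_EmulW_eq]
  refine le_antisymm (sInf_le ⟨ephiW_mem_ephiSpan, fun n _ => LW_mem_ephiSpan ρ n,
    fun j _ => dLamW_mem_ephiSpan j, fun j _ => mulLamW_mem_ephiSpan j,
    fun _ => mulLamInvW_mem_ephiSpan (by simp; omega)⟩) (le_sInf ?_)
  rintro V ⟨hE, hL, hD, hM, hI⟩
  refine Submodule.restrictScalars_span_le ?_
  rintro P _ ⟨m, hm, rfl⟩
  exact smul_mulLamPowW_ephiW_mem hr hE hL hD hM hI P hm

end
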